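/- arXiv:2402.14217 — 2 statements merged into one kernel-verified Lean document; each statement's English description precedes it below -/
import Mathlib

section
/- Let σ be a permutation of [N], let ℓ, m ∈ ℤ^N, and let a, b be integers with a + b = N - 1. Then ∇(∏_{i=1}^N h_{ℓ_i - m_{σ(i)}}) = ∑_{k=1}^N (ℓ_k + a) ∏_{i=1}^N h_{(ℓ - e_k)_i - m_{σ(i)}} + ∑_{k=1}^N (b - m_k) ∏_{i=1}^N h_{ℓ_i - (m + e_k)_{σ(i)}}. -/
open MvPolynomial

/-- The complete homogeneous symmetric polynomial `h_n` in `N` variables,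
with `h_n = 0` for `n < 0`. -/
noncomputable def hh (N : ℕ) (n : ℤ) : MvPolynomial (Fin N) ℤ :=
  if 0 ≤ n then ∑ d ∈ Finset.Nat.antidiagonalTuple N n.toNat, ∏ i, X i ^ d i else 0

/-- The diagonal derivative `∇ = ∂/∂x_1 + ⋯ + ∂/∂x_N`. -/
noncomputable def nabla (N : ℕ) (f : MvPolynomial (Fin N) ℤ) : MvPolynomial (Fin N) ℤ :=
  ∑ i, pderiv i f

/-- `a ∈ P_N`: weakly decreasing tuples of nonnegative integers. -/
def IsPar {N : ℕ} (a : Fin N → ℤ) : Prop :=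
  (∀ i j : Fin N, i ≤ j → a j ≤ a i) ∧ ∀ i, 0 ≤ a i

/-- The skew Schur polynomial, defined by the Jacobi–Trudi formula. -/
noncomputable def skewSchur (N : ℕ) (lam mu : Fin N → ℤ) : MvPolynomial (Fin N) ℤ :=
  Matrix.det (Matrix.of fun i j : Fin N => hh N (lam i - mu j - (i : ℤ) + (j : ℤ)))

/-- The tuple `e_k` with `1` in position `k` and `0` elsewhere. -/
def ee {N : ℕ} (k : Fin N) : Fin N → ℤ := fun i => if i = k then 1 else 0

/-!
∇ is a sum of derivations, so by the Leibniz rule the claim reduces to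
`∇ h_n = (n + N - 1) h_{n-1}`. Differentiating the monomials of degree `n` in `x_j` and
writing each one as `x_j · x^c`, the monomial `x^c` of degree `n - 1` collects the coefficient
`Σ_j (c_j + 1) = n - 1 + N`. Splitting `ℓ_k - m_{σ k} + N - 1 = (ℓ_k + a) + (b - m_{σ k})` and
reindexing the second sum by `σ` gives the two sums of the statement.
-/

open Finset

theorem Derivation.leibniz_finset_prod {R A ι : Type*} [CommSemiring R] [CommSemiring A]
    [Algebra R A] [DecidableEq ι] (D : Derivation R A A) (s : Finset ι) (f : ι → A) :
    D (∏ i ∈ s, f i) = ∑ k ∈ s, D (f k) * ∏ i ∈ s.erase k, f i := by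
  induction s using Finset.induction_on with
  | empty => simp
  | insert a s ha ih =>
    have hrest : ∑ k ∈ s, D (f k) * ∏ i ∈ (insert a s).erase k, f i =
        ∑ k ∈ s, f a * (D (f k) * ∏ i ∈ s.erase k, f i) := sum_congr rfl fun k hk => by
      rw [erase_insert_of_ne (ne_of_mem_of_not_mem hk ha).symm,
        prod_insert fun h => ha (mem_of_mem_erase h)]
      ring
    rw [prod_insert ha, D.leibniz, ih, sum_insert ha, erase_insert ha, hrest, smul_eq_mul,
      smul_eq_mul, mul_sum, add_comm, mul_comm]

theorem nabla_prod_eq_sum {N : ℕ} (f : Fin N → MvPolynomial (Fin N) ℤ) :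
    nabla N (∏ i, f i) = ∑ k, nabla N (f k) * ∏ i ∈ univ.erase k, f i := by
  simp only [nabla, Derivation.leibniz_finset_prod, sum_mul]
  exact sum_comm

theorem prod_comp_sub_ee {M : Type*} [CommMonoid M] {N : ℕ} (g : ℤ → M) (v : Fin N → ℤ)
    (k : Fin N) : ∏ i, g (v i - ee k i) = g (v k - 1) * ∏ i ∈ univ.erase k, g (v i) := by
  rw [← mul_prod_erase _ _ (mem_univ k)]
  congr 1
  · simp [ee]
  · exact prod_congr rfl fun i hi => by simp [ee, ne_of_mem_erase hi]

theorem hh_of_neg {N : ℕ} {n : ℤ} (hn : n < 0) : hh N n = 0 := if_neg (not_le.2 hn)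

theorem hh_zero (N : ℕ) : hh N 0 = 1 := by
  simp [hh, Finset.Nat.antidiagonalTuple_zero_right]

theorem monomial_equivFunOnFinite_symm {N : ℕ} (d : Fin N → ℕ) :
    monomial (Finsupp.equivFunOnFinite.symm d) (1 : ℤ) = ∏ i, X i ^ d i := by
  rw [monomial_eq, C_1, one_mul, Finsupp.prod_fintype _ _ fun _ => pow_zero _]
  rfl

theorem hh_natCast (N t : ℕ) :
    hh N t =
      ∑ d ∈ Finset.Nat.antidiagonalTuple N t, monomial (Finsupp.equivFunOnFinite.symm d) 1 := by
  simp [hh, monomial_equivFunOnFinite_symm]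

theorem sum_pderiv_monomial_antidiagonalTuple {N : ℕ} (t : ℕ) (j : Fin N) :
    ∑ d ∈ Finset.Nat.antidiagonalTuple N (t + 1),
        pderiv j (monomial (Finsupp.equivFunOnFinite.symm d) (1 : ℤ)) =
      ∑ c ∈ Finset.Nat.antidiagonalTuple N t,
        monomial (Finsupp.equivFunOnFinite.symm c) ((c j : ℤ) + 1) := by
  have hsymm : ∀ c : Fin N → ℕ, Finsupp.equivFunOnFinite.symm (c + Pi.single j 1) =
      Finsupp.equivFunOnFinite.symm c + Finsupp.single j 1 := fun c => by
    ext; simp [Pi.single_apply, Finsupp.single_apply, eq_comm]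
  -- `d = c + e_j`; the terms with `d j = 0` vanish
  symm
  refine sum_bij_ne_zero (fun c _ _ => c + Pi.single j 1) (fun c hc _ => ?_)
    (fun _ _ _ _ _ _ h => add_right_cancel h) (fun d hd hd0 => ?_) (fun c _ _ => ?_)
  · rw [Finset.Nat.mem_antidiagonalTuple] at hc ⊢
    simp [sum_add_distrib, hc]
  · have hdj : 1 ≤ d j := by
      by_contra! h
      simp [pderiv_monomial, Nat.lt_one_iff.1 h] at hd0
    have hd' : d - Pi.single j 1 + Pi.single j 1 = d := by
      funext i
      rcases eq_or_ne i j with rfl | hij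
      · simpa using Nat.sub_add_cancel hdj
      · simp [hij]
    refine ⟨d - Pi.single j 1, ?_, ?_, hd'⟩
    · rw [Finset.Nat.mem_antidiagonalTuple] at hd ⊢
      rw [← hd'] at hd
      simpa only [Pi.add_apply, sum_add_distrib, sum_pi_single', mem_univ, if_true,
        add_left_inj] using hd
    · rw [Ne, monomial_eq_zero]
      omega
  · rw [hsymm, pderiv_monomial, add_tsub_cancel_right]
    simp

theorem nabla_hh_natCast_succ (N t : ℕ) :
    nabla N (hh N (t + 1 : ℕ)) = C ((t : ℤ) + N) * hh N t := by
  simp only [hh_natCast, nabla, map_sum, sum_pderiv_monomial_antidiagonalTuple, mul_sum,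
    C_mul_monomial, mul_one]
  rw [sum_comm]
  refine sum_congr rfl fun c hc => ?_
  rw [← map_sum, sum_add_distrib, ← Nat.cast_sum, Finset.Nat.mem_antidiagonalTuple.1 hc]
  simp

theorem nabla_hh (N : ℕ) (n : ℤ) : nabla N (hh N n) = C (n + N - 1) * hh N (n - 1) := by
  rcases n with (_ | t) | t
  · simp [hh_zero, hh_of_neg, nabla]
  · simpa [add_sub_cancel_right, add_right_comm] using nabla_hh_natCast_succ N t
  · simp [hh_of_neg, Int.negSucc_lt_zero, nabla]

theorem nabla_prod (N : ℕ) (σ : Equiv.Perm (Fin N)) (l m : Fin N → ℤ)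
    (a b : ℤ) (hab : a + b = (N : ℤ) - 1) :
    nabla N (∏ i, hh N (l i - m (σ i))) =
      (∑ k, C (l k + a) * ∏ i, hh N ((l - ee k) i - m (σ i)))
      + ∑ k, C (b - m k) * ∏ i, hh N (l i - (m + ee k) (σ i)) := by
  have hl (k : Fin N) : ∏ i, hh N ((l - ee k) i - m (σ i)) =
      ∏ i, hh N (l i - m (σ i) - ee k i) := by
    simp only [Pi.sub_apply, sub_right_comm]
  have hm (k : Fin N) : ∏ i, hh N (l i - (m + ee (σ k)) (σ i)) =
      ∏ i, hh N (l i - m (σ i) - ee k i) := by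
    simp only [Pi.add_apply, ee, σ.injective.eq_iff, sub_add_eq_sub_sub]
  rw [nabla_prod_eq_sum, ← Equiv.sum_comp σ (fun k => C (b - m k) * _), ← sum_add_distrib]
  refine sum_congr rfl fun k _ => ?_
  rw [hl, hm, prod_comp_sub_ee, nabla_hh, ← add_mul, ← C_add, mul_assoc]
  congr 2
  omega
end

section
/- Let λ, μ ∈ P_N. Then ∑_{i ∈ [N], λ - e_i ∈ P_N} s_{(λ - e_i)/μ} = ∑_{i ∈ [N], μ + e_i ∈ P_N} s_{λ/(μ + e_i)}. In words: the sum of skew Schur polynomials obtained by removing a box from λ equals the sum obtained by adding a box to μ. -/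
open MvPolynomial

instance {N : ℕ} (a : Fin N → ℤ) : Decidable (IsPar a) := by unfold IsPar; infer_instance

lemma hh_neg {N : ℕ} {n : ℤ} (h : n < 0) : hh N n = 0 := by
  rw [hh, if_neg (not_le.mpr h)]

/-- The formal identity: over *all* indices, the two sums agree. -/
lemma key_sum (N : ℕ) (lam mu : Fin N → ℤ) :
    ∑ i : Fin N, skewSchur N (lam - ee i) mu
      = ∑ j : Fin N, skewSchur N lam (mu + ee j) := by
  unfold skewSchur
  simp only [Matrix.det_apply, Matrix.of_apply]
  rw [Finset.sum_comm]
  conv_rhs => rw [Finset.sum_comm]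
  refine Finset.sum_congr rfl fun σ _ => ?_
  refine (Fintype.sum_equiv σ _ _ fun j => ?_).symm
  refine congrArg _ (Finset.prod_congr rfl fun k _ => ?_)
  simp only [Pi.sub_apply, Pi.add_apply, ee, EmbeddingLike.apply_eq_iff_eq]
  congr 1
  ring

lemma lhs_zero {N : ℕ} {lam mu : Fin N → ℤ} (hlam : IsPar lam) (hmu : IsPar mu)
    {i : Fin N} (h : ¬ IsPar (lam - ee i)) : skewSchur N (lam - ee i) mu = 0 := by
  have hcase : (∃ i' : Fin N, (i' : ℕ) = (i : ℕ) + 1 ∧ lam i' = lam i) ∨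
      ((i : ℕ) + 1 = N ∧ lam i = 0) := by
    rcases not_and_or.1 h with h | h
    · push_neg at h
      obtain ⟨k, l, hkl, hgt⟩ := h
      have hgt' : lam k - (if k = i then 1 else 0) < lam l - (if l = i then 1 else 0) := hgt
      have hlk : lam l ≤ lam k := hlam.1 k l hkl
      have hki : k = i := by
        by_contra hk
        rw [if_neg hk] at hgt'
        split_ifs at hgt' <;> omega
      have hli : ¬ l = i := by
        intro e
        rw [if_pos hki, if_pos e] at hgt'
        omega
      rw [if_pos hki, if_neg hli, hki] at hgt'
      have hklv : (i : ℕ) < (l : ℕ) := by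
        have h1 : (k : ℕ) ≤ (l : ℕ) := hkl
        have h2 : (k : ℕ) = (i : ℕ) := congrArg Fin.val hki
        have h3 : (l : ℕ) ≠ (i : ℕ) := fun e => hli (Fin.ext e)
        omega
      have hlt : (i : ℕ) + 1 < N := lt_of_le_of_lt hklv l.2
      refine Or.inl ⟨⟨(i : ℕ) + 1, hlt⟩, rfl, ?_⟩
      have h1 : lam ⟨(i : ℕ) + 1, hlt⟩ ≤ lam i := hlam.1 i _ (by simp [Fin.le_def])
      have h2 : lam l ≤ lam ⟨(i : ℕ) + 1, hlt⟩ := hlam.1 _ l (by simp [Fin.le_def]; omega)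
      omega
    · push_neg at h
      obtain ⟨k, hk⟩ := h
      have hk' : lam k - (if k = i then 1 else 0) < 0 := hk
      have hki : k = i := by
        by_contra e
        rw [if_neg e] at hk'
        exact absurd (hlam.2 k) (by omega)
      rw [if_pos hki, hki] at hk'
      have h0 : lam i = 0 := le_antisymm (by omega) (hlam.2 i)
      by_cases hN : (i : ℕ) + 1 < N
      · refine Or.inl ⟨⟨(i : ℕ) + 1, hN⟩, rfl, ?_⟩
        have h1 : lam ⟨(i : ℕ) + 1, hN⟩ ≤ lam i := hlam.1 i _ (by simp [Fin.le_def])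
        have h2 := hlam.2 ⟨(i : ℕ) + 1, hN⟩
        omega
      · exact Or.inr ⟨by have := i.2; omega, h0⟩
  rcases hcase with ⟨i', hi', heq⟩ | ⟨hN, h0⟩
  · have hne : i ≠ i' := by intro e; rw [e] at hi'; omega
    refine Matrix.det_zero_of_row_eq hne (funext fun j => ?_)
    show hh N ((lam - ee i) i - mu j - ((i : ℕ) : ℤ) + ((j : ℕ) : ℤ))
        = hh N ((lam - ee i) i' - mu j - ((i' : ℕ) : ℤ) + ((j : ℕ) : ℤ))
    have e1 : (lam - ee i) i = lam i - 1 := by simp [ee]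
    have e2 : (lam - ee i) i' = lam i := by
      have : i' ≠ i := Ne.symm hne
      simp [ee, this, heq]
    have e3 : ((i' : ℕ) : ℤ) = ((i : ℕ) : ℤ) + 1 := by omega
    rw [e1, e2, e3]
    congr 1
    ring
  · refine Matrix.det_eq_zero_of_row_eq_zero i (fun j => ?_)
    show hh N ((lam - ee i) i - mu j - ((i : ℕ) : ℤ) + ((j : ℕ) : ℤ)) = 0
    have e1 : (lam - ee i) i = lam i - 1 := by simp [ee]
    rw [e1, h0]
    refine hh_neg ?_
    have hj := j.2
    have hmuj := hmu.2 j
    omega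

lemma rhs_zero {N : ℕ} {lam mu : Fin N → ℤ} (hmu : IsPar mu)
    {j : Fin N} (h : ¬ IsPar (mu + ee j)) : skewSchur N lam (mu + ee j) = 0 := by
  have hcase : ∃ j' : Fin N, (j' : ℕ) + 1 = (j : ℕ) ∧ mu j' = mu j := by
    rcases not_and_or.1 h with h | h
    · push_neg at h
      obtain ⟨k, l, hkl, hgt⟩ := h
      have hgt' : mu k + (if k = j then 1 else 0) < mu l + (if l = j then 1 else 0) := hgt
      have hlk : mu l ≤ mu k := hmu.1 k l hkl
      have hlj : l = j := by
        by_contra e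
        rw [if_neg e] at hgt'
        split_ifs at hgt' <;> omega
      have hkj : ¬ k = j := by
        intro e
        rw [if_pos e, if_pos hlj] at hgt'
        omega
      rw [if_neg hkj, if_pos hlj, hlj] at hgt'
      have hklv : (k : ℕ) < (j : ℕ) := by
        have h1 : (k : ℕ) ≤ (l : ℕ) := hkl
        have h2 : (l : ℕ) = (j : ℕ) := congrArg Fin.val hlj
        have h3 : (k : ℕ) ≠ (j : ℕ) := fun e => hkj (Fin.ext e)
        omega
      have hlt : (j : ℕ) - 1 < N := by have := j.2; omega
      have hv : ((⟨(j : ℕ) - 1, hlt⟩ : Fin N) : ℕ) = (j : ℕ) - 1 := rfl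
      refine ⟨⟨(j : ℕ) - 1, hlt⟩, by rw [hv]; omega, ?_⟩
      have h1 : mu ⟨(j : ℕ) - 1, hlt⟩ ≤ mu k := hmu.1 k _ (by rw [Fin.le_def, hv]; omega)
      have h2 : mu j ≤ mu ⟨(j : ℕ) - 1, hlt⟩ := hmu.1 _ j (by rw [Fin.le_def, hv]; omega)
      omega
    · exfalso
      push_neg at h
      obtain ⟨k, hk⟩ := h
      have hk' : mu k + (if k = j then 1 else 0) < 0 := hk
      have := hmu.2 k
      split_ifs at hk' <;> omega
  obtain ⟨j', hj', heq⟩ := hcase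
  have hne : j ≠ j' := by intro e; rw [e] at hj'; omega
  refine Matrix.det_zero_of_column_eq hne (fun i => ?_)
  show hh N (lam i - (mu + ee j) j - ((i : ℕ) : ℤ) + ((j : ℕ) : ℤ))
      = hh N (lam i - (mu + ee j) j' - ((i : ℕ) : ℤ) + ((j' : ℕ) : ℤ))
  have e1 : (mu + ee j) j = mu j + 1 := by simp [ee]
  have e2 : (mu + ee j) j' = mu j := by
    have : j' ≠ j := Ne.symm hne
    simp [ee, this, heq]
  have e3 : ((j' : ℕ) : ℤ) = ((j : ℕ) : ℤ) - 1 := by omega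
  rw [e1, e2, e3]
  congr 1
  ring

theorem sum_remove_eq_sum_add (N : ℕ) (lam mu : Fin N → ℤ)
    (hlam : IsPar lam) (hmu : IsPar mu) :
    (∑ i ∈ Finset.univ.filter (fun i : Fin N => IsPar (lam - ee i)),
        skewSchur N (lam - ee i) mu) =
      ∑ i ∈ Finset.univ.filter (fun i : Fin N => IsPar (mu + ee i)),
        skewSchur N lam (mu + ee i) := by
  have hL : (∑ i ∈ Finset.univ.filter (fun i : Fin N => IsPar (lam - ee i)),
      skewSchur N (lam - ee i) mu) = ∑ i : Fin N, skewSchur N (lam - ee i) mu := by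
    rw [Finset.sum_filter]
    refine Finset.sum_congr rfl fun i _ => ?_
    split_ifs with h
    · rfl
    · exact (lhs_zero hlam hmu h).symm
  have hR : (∑ i ∈ Finset.univ.filter (fun i : Fin N => IsPar (mu + ee i)),
      skewSchur N lam (mu + ee i)) = ∑ i : Fin N, skewSchur N lam (mu + ee i) := by
    rw [Finset.sum_filter]
    refine Finset.sum_congr rfl fun i _ => ?_
    split_ifs with h
    · rfl
    · exact (rhs_zero hmu h).symm
  rw [hL, hR, key_sum]
end
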